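/- For the Gray walk, the maximum M = sup_n S_n satisfies E[M] = ∞, even though E[S_n] = 0 and E[S_n²] = n for every n. -/

import Mathlib

open MeasureTheory ProbabilityTheory

/-- The `i`-th word of the infinite (reflected binary) Gray code, viewed as a
finite subset of `{1, 2, 3, …}`: `j ∈ graySet i` iff the `(j-1)`-th bit of
`i XOR (i/2)` is `1` (positions indexed from `1`, as in the paper). -/
def graySet (i : ℕ) : Finset ℕ :=
  (Finset.range (i + 2)).filter fun j => 1 ≤ j ∧ (i ^^^ (i >>> 1)).testBit (j - 1)

/-! The increments `X_i = ∏_{j ∈ A_i} ξ_j` are products of independent signs over pairwise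
distinct nonempty sets (the Gray code is injective), hence centred and orthonormal; this gives
`E S_n = 0` and `E S_n² = n`.

For the supremum, `A_{2t} ∖ {1} = A_{2t+1} ∖ {1} = A_t + 1` and `1` lies in exactly one of
`A_{2t}`, `A_{2t+1}`, so `X_{2t} + X_{2t+1} = (1 + ξ_1) X'_t`, where `X'` is the Gray walk of the
shifted signs `ξ_{j+1}`. If `ξ_1 = -1` the walk never exceeds `0`; if `ξ_1 = 1` it is the shifted
walk run at double speed. By induction the walk climbs to `2^{J-1} - 1` and never beyond, where
`J = min {j | ξ_j = -1}`, so `E[sup S] ≥ ∑_J (2^{J-1} - 1) 2^{-J} = ∞`. -/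

open Finset Function
open scoped ENNReal

theorem Nat.xor_shiftRight_one_injective : Injective fun i : ℕ => i ^^^ i >>> 1 := by
  intro a b h
  have hfix : a ^^^ b = (a ^^^ b) >>> 1 := by
    refine Nat.eq_of_testBit_eq fun t => ?_
    have := congrArg (Nat.testBit · t) h
    simp only [Nat.testBit_xor, Nat.testBit_shiftRight] at this ⊢
    grind
  rw [Nat.shiftRight_one] at hfix
  exact xor_eq_zero_iff.mp (by omega)

theorem zero_notMem_graySet (i : ℕ) : 0 ∉ graySet i := by
  simp [graySet]

theorem succ_mem_graySet {i j : ℕ} : j + 1 ∈ graySet i ↔ (i ^^^ i >>> 1).testBit j := by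
  simp only [graySet, mem_filter, mem_range, le_add_iff_nonneg_left, zero_le, true_and,
    Nat.add_sub_cancel, and_iff_right_iff_imp]
  intro h
  by_contra hj
  have hi : i < 2 ^ j := Nat.lt_two_pow_self.trans_le (Nat.pow_le_pow_right two_pos (by omega))
  have hi' : i < 2 ^ (1 + j) := hi.trans (Nat.pow_lt_pow_right one_lt_two (by omega))
  simp [Nat.testBit_xor, Nat.testBit_shiftRight, Nat.testBit_lt_two_pow hi,
    Nat.testBit_lt_two_pow hi'] at h

theorem graySet_injective : Injective graySet := by
  intro a b h
  refine Nat.xor_shiftRight_one_injective (Nat.eq_of_testBit_eq fun t => ?_)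
  have := congrArg (t + 1 ∈ ·) h
  simp only [succ_mem_graySet, eq_iff_iff] at this
  exact Bool.eq_iff_iff.mpr this

theorem graySet_zero : graySet 0 = ∅ := rfl

theorem graySet_nonempty {i : ℕ} (hi : i ≠ 0) : (graySet i).Nonempty :=
  nonempty_iff_ne_empty.mpr fun h => hi (graySet_injective (h.trans graySet_zero.symm))

theorem testBit_xor_shiftRight_one_succ (i j : ℕ) :
    (i ^^^ i >>> 1).testBit (j + 1) = ((i / 2) ^^^ (i / 2) >>> 1).testBit j := by
  rw [Nat.testBit_xor, Nat.testBit_xor, Nat.testBit_shiftRight, Nat.testBit_shiftRight,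
    Nat.testBit_div_two, Nat.testBit_div_two, add_comm 1 j, add_comm 1 (j + 1)]

theorem map_graySet_div_two (i : ℕ) :
    (graySet (i / 2)).map (addRightEmbedding 1) = (graySet i).erase 1 := by
  ext j
  rcases j with _ | _ | j
  · simp [zero_notMem_graySet]
  · simp [zero_notMem_graySet]
  · simp [succ_mem_graySet, testBit_xor_shiftRight_one_succ, -Nat.testBit_xor]

theorem prod_graySet {M : Type*} [CommMonoid M] (ε : ℕ → M) (i : ℕ) :
    ∏ j ∈ graySet i, ε j =
      (if 1 ∈ graySet i then ε 1 else 1) * ∏ j ∈ graySet (i / 2), ε (j + 1) := by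
  have hmap : ∏ j ∈ graySet (i / 2), ε (j + 1) = ∏ j ∈ (graySet i).erase 1, ε j := by
    rw [← map_graySet_div_two, prod_map]; rfl
  split_ifs with h
  · rw [hmap, mul_prod_erase _ _ h]
  · rw [hmap, erase_eq_of_notMem h, one_mul]

theorem one_mem_graySet_two_mul_add_one (t : ℕ) :
    1 ∈ graySet (2 * t + 1) ↔ 1 ∉ graySet (2 * t) := by
  have h₁ : (2 * t + 1) >>> 1 = t := by rw [Nat.shiftRight_one]; omega
  have h₀ : (2 * t) >>> 1 = t := by rw [Nat.shiftRight_one]; omega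
  rw [← zero_add 1, succ_mem_graySet, succ_mem_graySet, h₀, h₁, Nat.testBit_xor,
    Nat.testBit_xor, Nat.testBit_zero, Nat.testBit_zero (2 * t)]
  simp

def grayWalk (ε : ℕ → ℝ) (n : ℕ) : ℝ := ∑ i ∈ Icc 1 n, ∏ j ∈ graySet i, ε j

/-- Unlike `grayWalk`, this sum includes `X_0 = 1`, which makes the doubling recursion
`graySum_two_mul` exact. -/
def graySum (ε : ℕ → ℝ) (n : ℕ) : ℝ := ∑ i ∈ range n, ∏ j ∈ graySet i, ε j

theorem grayWalk_eq_graySum_sub_one (ε : ℕ → ℝ) (n : ℕ) :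
    grayWalk ε n = graySum ε (n + 1) - 1 := by
  rw [graySum, sum_range_eq_add_Ico _ n.add_one_pos, Ico_add_one_right_eq_Icc, graySet_zero,
    prod_empty, grayWalk]
  ring

theorem graySum_two_mul (ε : ℕ → ℝ) (m : ℕ) :
    graySum ε (2 * m) = (1 + ε 1) * graySum (fun j => ε (j + 1)) m := by
  induction m with
  | zero => simp [graySum]
  | succ m ih =>
    have hpair : ∏ j ∈ graySet (2 * m), ε j + ∏ j ∈ graySet (2 * m + 1), ε j =
        (1 + ε 1) * ∏ j ∈ graySet m, ε (j + 1) := by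
      rw [prod_graySet _ (2 * m), prod_graySet _ (2 * m + 1), Nat.mul_div_cancel_left _ two_pos,
        Nat.mul_add_div two_pos, Nat.div_eq_of_lt one_lt_two, add_zero]
      by_cases h : 1 ∈ graySet (2 * m) <;> simp [h, one_mem_graySet_two_mul_add_one] <;> ring
    simp only [graySum] at ih ⊢
    rw [Nat.mul_succ, sum_range_succ, sum_range_succ, add_assoc, ih, hpair, sum_range_succ,
      mul_add]

theorem graySum_two_pow {ε : ℕ → ℝ} {k : ℕ} (hk : ∀ j ∈ Icc 1 k, ε j = 1) :
    graySum ε (2 ^ k) = 2 ^ k := by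
  induction k generalizing ε with
  | zero => simp [graySum, graySet_zero]
  | succ k ih =>
    rw [pow_succ', graySum_two_mul, hk 1 (by simp), ih fun j hj => hk (j + 1) (by simp_all)]
    ring

theorem abs_prod_graySet_le_one {ε : ℕ → ℝ} (hε : ∀ j, |ε j| ≤ 1) (i : ℕ) :
    |∏ j ∈ graySet i, ε j| ≤ 1 := by
  rw [abs_prod]
  exact prod_le_one (fun j _ => abs_nonneg _) fun j _ => hε j

theorem graySum_le_two_pow {ε : ℕ → ℝ} (hε : ∀ j, |ε j| ≤ 1) {k : ℕ}
    (hk : ∀ j ∈ Icc 1 k, ε j = 1) (hk1 : ε (k + 1) = -1) (n : ℕ) :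
    graySum ε n ≤ 2 ^ k := by
  induction k generalizing ε n with
  | zero =>
    obtain ⟨m, rfl | rfl⟩ := n.even_or_odd'
    · simp [graySum_two_mul, hk1]
    · rw [graySum, sum_range_succ, ← graySum, graySum_two_mul, hk1, add_neg_cancel, zero_mul,
        zero_add, pow_zero]
      exact (le_abs_self _).trans (abs_prod_graySet_le_one hε _)
  | succ k ih =>
    set ε' : ℕ → ℝ := fun j => ε (j + 1)
    have h1 : ε 1 = 1 := hk 1 (by simp)
    have ih' : ∀ n, graySum ε' n ≤ 2 ^ k :=
      ih (fun j => hε (j + 1)) (fun j hj => hk (j + 1) (by simp_all)) hk1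
    obtain ⟨m, rfl | rfl⟩ := n.even_or_odd'
    · rw [graySum_two_mul, h1, pow_succ]
      linarith [ih' m]
    · have hodd : graySum ε (2 * m + 1) = graySum ε' m + graySum ε' (m + 1) := by
        rw [graySum, sum_range_succ, ← graySum, graySum_two_mul, prod_graySet,
          Nat.mul_div_cancel_left _ two_pos, h1, ite_self, one_mul]
        simp only [graySum, sum_range_succ]
        ring
      rw [hodd, pow_succ]
      linarith [ih' m, ih' (m + 1)]

theorem two_pow_sub_one_le_iSup_grayWalk {ε : ℕ → ℝ} (hε : ∀ j, |ε j| ≤ 1) {k : ℕ}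
    (hk : ∀ j ∈ Icc 1 k, ε j = 1) (hk1 : ε (k + 1) = -1) :
    (2 : ℝ) ^ k - 1 ≤ ⨆ n, grayWalk ε n := by
  have hbdd : BddAbove (Set.range (grayWalk ε)) := by
    refine ⟨2 ^ k - 1, Set.forall_mem_range.mpr fun n => ?_⟩
    rw [grayWalk_eq_graySum_sub_one]
    linarith [graySum_le_two_pow hε hk hk1 (n + 1)]
  calc (2 : ℝ) ^ k - 1 = grayWalk ε (2 ^ k - 1) := by
        rw [grayWalk_eq_graySum_sub_one, Nat.sub_add_cancel Nat.one_le_two_pow,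
          graySum_two_pow hk]
    _ ≤ ⨆ n, grayWalk ε n := le_ciSup hbdd _

theorem Finset.prod_mul_prod_eq_prod_symmDiff {ι M : Type*} [DecidableEq ι] [CommMonoid M]
    {ε : ι → M} (hε : ∀ j, ε j * ε j = 1) (A B : Finset ι) :
    (∏ j ∈ A, ε j) * ∏ j ∈ B, ε j = ∏ j ∈ symmDiff A B, ε j := by
  have hunion : A ∪ B = symmDiff A B ∪ A ∩ B := by
    rw [union_comm (symmDiff A B)]; exact (inf_sup_symmDiff A B).symm
  have hdisj : Disjoint (symmDiff A B) (A ∩ B) := disjoint_symmDiff_inf A B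
  rw [← prod_union_inter, hunion, prod_union hdisj, mul_assoc,
    ← prod_mul_distrib, prod_congr rfl fun j _ => hε j, prod_const_one, mul_one]

section Rademacher

variable {Ω : Type*} [MeasurableSpace Ω] {μ : Measure Ω} [IsProbabilityMeasure μ]

theorem ae_abs_eq_one {X : Ω → ℝ} (hX : Measurable X)
    (hdist : μ {ω | X ω = 1} = 1 / 2 ∧ μ {ω | X ω = -1} = 1 / 2) :
    ∀ᵐ ω ∂μ, |X ω| = 1 := by
  have hunion : {ω | |X ω| = 1} = {ω | X ω = 1} ∪ {ω | X ω = -1} := by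
    ext ω; simp [abs_eq zero_le_one]
  have hdisj : Disjoint {ω | X ω = 1} {ω | X ω = -1} :=
    Set.disjoint_left.mpr fun ω (h₁ : X ω = 1) (h₂ : X ω = -1) => by norm_num [h₁] at h₂
  rw [ae_iff_measure_eq (p := fun ω => |X ω| = 1)
    (hX.abs (measurableSet_singleton 1)).nullMeasurableSet, hunion,
    measure_union hdisj (hX (measurableSet_singleton _)), hdist.1, hdist.2, measure_univ,
    ENNReal.add_halves]

theorem integral_eq_zero_of_measure_eq_half {X : Ω → ℝ} (hX : Measurable X)
    (hdist : μ {ω | X ω = 1} = 1 / 2 ∧ μ {ω | X ω = -1} = 1 / 2) :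
    ∫ ω, X ω ∂μ = 0 := by
  have hpos : MeasurableSet {ω | X ω = 1} := hX (measurableSet_singleton _)
  have hneg : MeasurableSet {ω | X ω = -1} := hX (measurableSet_singleton _)
  have hsplit : X =ᵐ[μ] fun ω => {ω | X ω = 1}.indicator 1 ω - {ω | X ω = -1}.indicator 1 ω := by
    filter_upwards [ae_abs_eq_one hX hdist] with ω hω
    rcases (abs_eq zero_le_one).mp hω with h | h <;> norm_num [Set.indicator, h]
  rw [integral_congr_ae hsplit, integral_sub ((integrable_const 1).indicator hpos)
    ((integrable_const 1).indicator hneg), integral_indicator_one hpos,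
    integral_indicator_one hneg, measureReal_def, measureReal_def, hdist.1, hdist.2, sub_self]

variable {ι : Type*} {ξ : ι → Ω → ℝ} (hmeas : ∀ j, Measurable (ξ j))
  (hdist : ∀ j, μ {ω | ξ j ω = 1} = 1 / 2 ∧ μ {ω | ξ j ω = -1} = 1 / 2)
include hmeas hdist

theorem integral_prod_eq_zero (hindep : iIndepFun ξ μ) {s : Finset ι} (hs : s.Nonempty) :
    ∫ ω, ∏ j ∈ s, ξ j ω ∂μ = 0 := by
  classical
  obtain ⟨j₀, hj₀⟩ := hs
  have hindep₀ : IndepFun (∏ j ∈ s.erase j₀, ξ j) (ξ j₀) μ :=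
    hindep.indepFun_finsetProd_of_notMem hmeas (s.notMem_erase j₀)
  have hfactor : (fun ω => ∏ j ∈ s, ξ j ω) = (∏ j ∈ s.erase j₀, ξ j) * ξ j₀ := by
    ext ω; simp [prod_erase_mul s _ hj₀]
  rw [hfactor, hindep₀.integral_mul_eq_mul_integral
    (aestronglyMeasurable_prod _ fun j _ => (hmeas j).aestronglyMeasurable)
    (hmeas j₀).aestronglyMeasurable, integral_eq_zero_of_measure_eq_half (hmeas j₀) (hdist j₀),
    mul_zero]

variable [Countable ι]

theorem ae_forall_abs_eq_one : ∀ᵐ ω ∂μ, ∀ j, |ξ j ω| = 1 :=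
  ae_all_iff.mpr fun j => ae_abs_eq_one (hmeas j) (hdist j)

theorem integrable_prod (s : Finset ι) : Integrable (fun ω => ∏ j ∈ s, ξ j ω) μ := by
  refine .of_bound (Finset.measurable_prod s fun j _ => hmeas j).aestronglyMeasurable 1 ?_
  filter_upwards [ae_forall_abs_eq_one hmeas hdist] with ω hω
  simp [hω]

theorem prod_mul_prod_ae_eq [DecidableEq ι] (A B : Finset ι) :
    (fun ω => (∏ j ∈ A, ξ j ω) * ∏ j ∈ B, ξ j ω) =ᵐ[μ] fun ω => ∏ j ∈ symmDiff A B, ξ j ω := by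
  filter_upwards [ae_forall_abs_eq_one hmeas hdist] with ω hω
  exact prod_mul_prod_eq_prod_symmDiff (fun j => by rw [← abs_mul_abs_self, hω, one_mul]) A B

theorem integrable_prod_mul_prod (A B : Finset ι) :
    Integrable (fun ω => (∏ j ∈ A, ξ j ω) * ∏ j ∈ B, ξ j ω) μ := by
  classical
  exact (integrable_prod hmeas hdist _).congr (prod_mul_prod_ae_eq hmeas hdist A B).symm

theorem integral_prod_mul_prod [DecidableEq ι] (hindep : iIndepFun ξ μ) (A B : Finset ι) :
    ∫ ω, (∏ j ∈ A, ξ j ω) * ∏ j ∈ B, ξ j ω ∂μ = if A = B then 1 else 0 := by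
  rw [integral_congr_ae (prod_mul_prod_ae_eq hmeas hdist A B)]
  split_ifs with h
  · simp [h]
  · exact integral_prod_eq_zero hmeas hdist hindep (symmDiff_nonempty.mpr h)

end Rademacher

section FirstNegEvent

variable {Ω : Type*} {ξ : ℕ → Ω → ℝ}

/-- The event `J = k + 1`, where `J = min {j | ξ j = -1}`. -/
def firstNegEvent (ξ : ℕ → Ω → ℝ) (k : ℕ) : Set Ω :=
  ⋂ j ∈ Icc 1 (k + 1), ξ j ⁻¹' {if j = k + 1 then -1 else 1}

theorem mem_firstNegEvent {k : ℕ} {ω : Ω} :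
    ω ∈ firstNegEvent ξ k ↔ (∀ j ∈ Icc 1 k, ξ j ω = 1) ∧ ξ (k + 1) ω = -1 := by
  simp only [firstNegEvent, Set.mem_iInter, Set.mem_preimage, Set.mem_singleton_iff, mem_Icc]
  constructor
  · intro h
    exact ⟨fun j hj => by simpa [show j ≠ k + 1 by omega] using h j (by omega),
      by simpa using h (k + 1) (by omega)⟩
  · rintro ⟨hk, hk1⟩ j hj
    split_ifs with h
    · exact h ▸ hk1
    · exact hk j (by omega)

theorem pairwise_disjoint_firstNegEvent : Pairwise (Disjoint on firstNegEvent ξ) := by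
  have key : ∀ {k k'}, k < k' → Disjoint (firstNegEvent ξ k) (firstNegEvent ξ k') := by
    intro k k' hkk'
    refine Set.disjoint_left.mpr fun ω hk hk' => ?_
    have h₁ := (mem_firstNegEvent.mp hk).2
    have h₂ := (mem_firstNegEvent.mp hk').1 (k + 1) (by simp; omega)
    norm_num [h₁] at h₂
  intro k k' hne
  rcases hne.lt_or_gt with h | h
  exacts [key h, (key h).symm]

theorem measurableSet_firstNegEvent [MeasurableSpace Ω] (hmeas : ∀ j, Measurable (ξ j))
    (k : ℕ) : MeasurableSet (firstNegEvent ξ k) :=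
  .biInter (Icc 1 (k + 1)).countable_toSet fun j _ => hmeas j (measurableSet_singleton _)

theorem measure_firstNegEvent [MeasurableSpace Ω] {μ : Measure Ω} (hindep : iIndepFun ξ μ)
    (hdist : ∀ j, μ {ω | ξ j ω = 1} = 1 / 2 ∧ μ {ω | ξ j ω = -1} = 1 / 2) (k : ℕ) :
    μ (firstNegEvent ξ k) = 2⁻¹ ^ (k + 1) := by
  rw [firstNegEvent, hindep.meas_biInter fun j _ => ⟨_, measurableSet_singleton _, rfl⟩]
  have hhalf : ∀ j ∈ Icc 1 (k + 1), μ (ξ j ⁻¹' {if j = k + 1 then -1 else 1}) = 2⁻¹ := by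
    intro j _
    split_ifs
    exacts [one_div (2 : ℝ≥0∞) ▸ (hdist j).2, one_div (2 : ℝ≥0∞) ▸ (hdist j).1]
  rw [prod_congr rfl hhalf, prod_const, Nat.card_Icc, Nat.add_sub_cancel]

end FirstNegEvent

theorem ENNReal.two_pow_mul_inv_two_pow_add_two (k : ℕ) :
    (2 : ℝ≥0∞) ^ k * 2⁻¹ ^ (k + 2) = 4⁻¹ := by
  rw [pow_add, ← mul_assoc, ← mul_pow, ENNReal.mul_inv_cancel two_ne_zero ENNReal.ofNat_ne_top,
    one_pow, one_mul, ← ENNReal.inv_pow]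
  norm_num

section GrayWalk

variable {Ω : Type*} [MeasurableSpace Ω] {μ : Measure Ω} [IsProbabilityMeasure μ]
  {ξ : ℕ → Ω → ℝ} (hmeas : ∀ j, Measurable (ξ j)) (hindep : iIndepFun ξ μ)
  (hdist : ∀ j, μ {ω | ξ j ω = 1} = 1 / 2 ∧ μ {ω | ξ j ω = -1} = 1 / 2)
include hmeas hindep hdist

theorem integral_grayWalk (n : ℕ) : ∫ ω, grayWalk (ξ · ω) n ∂μ = 0 := by
  simp only [grayWalk]
  rw [integral_finsetSum _ fun i _ => integrable_prod hmeas hdist _]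
  exact sum_eq_zero fun i hi =>
    integral_prod_eq_zero hmeas hdist hindep (graySet_nonempty (by simp at hi; omega))

theorem integral_grayWalk_sq (n : ℕ) : ∫ ω, grayWalk (ξ · ω) n ^ 2 ∂μ = n := by
  simp only [grayWalk, sq, sum_mul_sum]
  rw [integral_finsetSum _ fun i _ => integrable_finsetSum _ fun i' _ =>
    integrable_prod_mul_prod hmeas hdist _ _]
  simp_rw [integral_finsetSum _ fun i' _ => integrable_prod_mul_prod hmeas hdist _ _,
    integral_prod_mul_prod hmeas hdist hindep, graySet_injective.eq_iff, sum_ite_eq, sum_ite_mem,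
    inter_self]
  simp

theorem lintegral_iSup_grayWalk_eq_top :
    ∫⁻ ω, ENNReal.ofReal (⨆ n, grayWalk (ξ · ω) n) ∂μ = ⊤ := by
  set M : Ω → ℝ≥0∞ := fun ω => ENNReal.ofReal (⨆ n, grayWalk (ξ · ω) n)
  -- Summing over `J = k + 2` rather than `J = k + 1` makes every term at least `1 / 4`.
  have hlow : ∀ k, ∀ᵐ ω ∂μ, ω ∈ firstNegEvent ξ (k + 1) → 2 ^ k ≤ M ω := by
    intro k
    filter_upwards [ae_forall_abs_eq_one hmeas hdist] with ω hω hmem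
    obtain ⟨hk, hk1⟩ := mem_firstNegEvent.mp hmem
    have hsup := two_pow_sub_one_le_iSup_grayWalk (fun j => (hω j).le) hk hk1
    have hpow : (2 : ℝ) ^ k ≤ 2 ^ (k + 1) - 1 := by
      rw [pow_succ]; linarith [(one_le_pow₀ one_le_two : (1 : ℝ) ≤ 2 ^ k)]
    simpa [M] using ENNReal.ofReal_le_ofReal (hpow.trans hsup)
  refine top_le_iff.mp ?_
  calc ⊤ = ∑' _ : ℕ, (4⁻¹ : ℝ≥0∞) := (ENNReal.tsum_const_eq_top_of_ne_zero (by norm_num)).symm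
    _ = ∑' k, ∫⁻ _ in firstNegEvent ξ (k + 1), 2 ^ k ∂μ := by
      simp_rw [setLIntegral_const, measure_firstNegEvent hindep hdist,
        ENNReal.two_pow_mul_inv_two_pow_add_two]
    _ ≤ ∑' k, ∫⁻ ω in firstNegEvent ξ (k + 1), M ω ∂μ := ENNReal.tsum_le_tsum fun k =>
      lintegral_mono_ae ((ae_restrict_iff' (measurableSet_firstNegEvent hmeas _)).mpr (hlow k))
    _ = ∫⁻ ω in ⋃ k, firstNegEvent ξ (k + 1), M ω ∂μ :=
      (lintegral_iUnion (fun k => measurableSet_firstNegEvent hmeas _)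
        (pairwise_disjoint_firstNegEvent.comp_of_injective (add_left_injective 1)) M).symm
    _ ≤ ∫⁻ ω, M ω ∂μ := setLIntegral_le_lintegral _ _

end GrayWalk

/-- For the Gray walk `S_n = ∑_{i=1}^n X_i` with `X_i = ∏_{j ∈ A_i} ξ_j`:
`E[S_n] = 0` and `E[S_n²] = n` for every `n`, yet the supremum
`M = sup_n S_n` has infinite expectation. -/
theorem gray_walk_max_infinite_expectation
    {Ω : Type*} [MeasurableSpace Ω] (μ : Measure Ω) [IsProbabilityMeasure μ]
    (ξ : ℕ → Ω → ℝ) (hmeas : ∀ j, Measurable (ξ j))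
    (hindep : iIndepFun ξ μ)
    (hdist : ∀ j, μ {ω | ξ j ω = 1} = 1/2 ∧ μ {ω | ξ j ω = -1} = 1/2)
    (S : ℕ → Ω → ℝ)
    (hS : ∀ n ω, S n ω = ∑ i ∈ Finset.Icc 1 n, ∏ j ∈ graySet i, ξ j ω) :
    (∀ n : ℕ, ∫ ω, S n ω ∂μ = 0) ∧
    (∀ n : ℕ, ∫ ω, (S n ω) ^ 2 ∂μ = n) ∧
    (∫⁻ ω, ENNReal.ofReal (⨆ n : ℕ, S n ω) ∂μ = ⊤) := by
  obtain rfl : S = fun n ω => grayWalk (ξ · ω) n := funext fun n => funext (hS n)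
  exact ⟨integral_grayWalk hmeas hindep hdist, integral_grayWalk_sq hmeas hindep hdist,
    lintegral_iSup_grayWalk_eq_top hmeas hindep hdist⟩
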